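/- arXiv:1505.01364 — 2 statements merged into one kernel-verified Lean document; each statement's English description precedes it below -/
import Mathlib

section
/- (Schoenberg) If h : G × G → ℝ is a conditionally negative definite kernel, then for every t > 0 the kernel (x,y) ↦ exp(−t·h(x,y)) is positive definite. -/
def IsCondNegDef {G : Type*} (h : G → G → ℝ) : Prop :=
  (∀ x y, h x y = h y x) ∧ (∀ x, h x x = 0) ∧
  ∀ (n : ℕ) (x : Fin n → G) (c : Fin n → ℝ), (∑ i, c i) = 0 →
    (∑ i, ∑ j, c i * c j * h (x i) (x j)) ≤ 0

def IsPosDefKernel {G : Type*} (φ : G → G → ℝ) : Prop :=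
  (∀ x y, φ x y = φ y x) ∧
  ∀ (n : ℕ) (x : Fin n → G) (c : Fin n → ℝ),
    0 ≤ ∑ i, ∑ j, c i * c j * φ (x i) (x j)

/-
Fix a base point `x₀`. Conditional negative definiteness of `h`, applied to the family extended by
`x₀`, says that `ψ(x, y) = h(x, x₀) + h(y, x₀) - h(x, y)` is positive definite. Positive definite
kernels are closed under Schur products and nonnegative scalings, hence under powers and, summing
the exponential series, under `exp`. Finally
`exp(-t h(x, y)) = f(x) f(y) exp(t ψ(x, y))` with `f(x) = exp(-t h(x, x₀))`, a Schur product of a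
rank-one kernel and a positive definite one.
-/

open Finset

theorem Matrix.posSemidef_iff_sum_sum_mul_nonneg {n : Type*} [Fintype n] {M : Matrix n n ℝ} :
    M.PosSemidef ↔ M.IsHermitian ∧ ∀ c : n → ℝ, 0 ≤ ∑ i, ∑ j, c i * c j * M i j := by
  simp only [posSemidef_iff_dotProduct_mulVec, dotProduct, mulVec, star_trivial, mul_sum]
  simp only [mul_comm, mul_left_comm]

section

variable {G : Type*}

theorem isPosDefKernel_iff_posSemidef {φ : G → G → ℝ} :
    IsPosDefKernel φ ↔ (∀ x y, φ x y = φ y x) ∧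
      ∀ n (x : Fin n → G), (Matrix.of fun i j => φ (x i) (x j)).PosSemidef := by
  simp only [Matrix.posSemidef_iff_sum_sum_mul_nonneg, Matrix.of_apply]
  refine ⟨fun ⟨hsymm, hpos⟩ => ⟨hsymm, fun n x => ⟨Matrix.IsHermitian.ext fun i j => ?_, hpos n x⟩⟩,
    fun ⟨hsymm, h⟩ => ⟨hsymm, fun n x => (h n x).2⟩⟩
  simp [hsymm (x i) (x j)]

theorem isPosDefKernel_of_isEmpty [IsEmpty G] {φ : G → G → ℝ} (hφ : ∀ x y, φ x y = φ y x) :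
    IsPosDefKernel φ :=
  ⟨hφ, fun n x c => by
    have := Function.isEmpty x
    simp⟩

theorem isPosDefKernel_rankOne (f : G → ℝ) : IsPosDefKernel fun x y => f x * f y := by
  refine ⟨fun x y => mul_comm _ _, fun n x c => ?_⟩
  calc 0 ≤ (∑ i, c i * f (x i)) * ∑ j, c j * f (x j) := mul_self_nonneg _
    _ = _ := by
      rw [sum_mul_sum]
      exact sum_congr rfl fun i _ => sum_congr rfl fun j _ => by ring

namespace IsPosDefKernel

variable {φ ψ : G → G → ℝ}

theorem mul (hφ : IsPosDefKernel φ) (hψ : IsPosDefKernel ψ) :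
    IsPosDefKernel fun x y => φ x y * ψ x y := by
  rw [isPosDefKernel_iff_posSemidef] at *
  exact ⟨fun x y => by rw [hφ.1 x y, hψ.1 x y], fun n x => (hφ.2 n x).hadamard (hψ.2 n x)⟩

theorem const_mul (hφ : IsPosDefKernel φ) {a : ℝ} (ha : 0 ≤ a) :
    IsPosDefKernel fun x y => a * φ x y := by
  refine ⟨fun x y => by simp only [hφ.1 x y], fun n x c => ?_⟩
  calc 0 ≤ a * ∑ i, ∑ j, c i * c j * φ (x i) (x j) := mul_nonneg ha (hφ.2 n x c)
    _ = _ := by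
      simp only [mul_sum]
      exact sum_congr rfl fun i _ => sum_congr rfl fun j _ => by ring

theorem pow (hφ : IsPosDefKernel φ) (k : ℕ) : IsPosDefKernel fun x y => φ x y ^ k := by
  induction k with
  | zero => simpa using isPosDefKernel_rankOne fun _ : G => (1 : ℝ)
  | succ k ih => simpa only [pow_succ] using ih.mul hφ

theorem exp (hφ : IsPosDefKernel φ) : IsPosDefKernel fun x y => Real.exp (φ x y) := by
  refine ⟨fun x y => by simp only [hφ.1 x y], fun n x c => ?_⟩
  have hexp (r : ℝ) : HasSum (fun k => r ^ k / k.factorial) (Real.exp r) :=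
    Real.exp_eq_exp_ℝ ▸ NormedSpace.expSeries_div_hasSum_exp r
  have hsum : HasSum (fun k => ∑ i, ∑ j, c i * c j * (φ (x i) (x j) ^ k / k.factorial))
      (∑ i, ∑ j, c i * c j * Real.exp (φ (x i) (x j))) :=
    hasSum_sum fun i _ => hasSum_sum fun j _ => (hexp _).mul_left _
  refine hsum.nonneg fun k => ?_
  simpa only [div_eq_inv_mul] using
    ((hφ.pow k).const_mul (by positivity : (0 : ℝ) ≤ (k.factorial : ℝ)⁻¹)).2 n x c

end IsPosDefKernel

/-- The kernel is twice the Gromov product based at `x₀` when `h` is a distance. -/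
theorem IsCondNegDef.isPosDefKernel_gromov {h : G → G → ℝ} (hh : IsCondNegDef h) (x₀ : G) :
    IsPosDefKernel fun x y => h x x₀ + h y x₀ - h x y := by
  refine ⟨fun x y => by simp only [hh.1 x y]; ring, fun n x c => ?_⟩
  set S := ∑ i, c i
  set A := ∑ i, c i * h (x i) x₀
  -- adjoin `x₀` with weight `-S`, so that the weights sum to zero
  have hcnd := hh.2.2 (n + 1) (Fin.cons x₀ x) (Fin.cons (-S) c) (by simp [Fin.sum_univ_succ, S])
  simp only [Fin.sum_univ_succ, Fin.cons_zero, Fin.cons_succ, hh.2.1, hh.1 x₀, mul_zero,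
    zero_add, sum_add_distrib] at hcnd
  have hleft : ∑ i, c i * -S * h (x i) x₀ = -(S * A) := by
    simp only [A, mul_sum, ← sum_neg_distrib]
    exact sum_congr rfl fun i _ => by ring
  have hright : ∑ i, -S * c i * h (x i) x₀ = -(S * A) := by
    simp only [A, mul_sum, ← sum_neg_distrib]
    exact sum_congr rfl fun i _ => by ring
  have hrow : ∑ i, ∑ j, c i * c j * h (x i) x₀ = A * S := by
    simp only [A, S, sum_mul_sum]
    exact sum_congr rfl fun i _ => sum_congr rfl fun j _ => by ring
  have hcol : ∑ i, ∑ j, c i * c j * h (x j) x₀ = S * A := by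
    simp only [A, S, sum_mul_sum]
    exact sum_congr rfl fun i _ => sum_congr rfl fun j _ => by ring
  simp only [mul_add, mul_sub, sum_add_distrib, sum_sub_distrib, hrow, hcol]
  linarith

end

theorem schoenberg {G : Type*} (h : G → G → ℝ) (hh : IsCondNegDef h) :
    ∀ t : ℝ, 0 < t → IsPosDefKernel (fun x y => Real.exp (-t * h x y)) := by
  intro t ht
  rcases isEmpty_or_nonempty G with _ | ⟨⟨x₀⟩⟩
  · exact isPosDefKernel_of_isEmpty fun x y => by rw [hh.1 x y]
  have hfactor : (fun x y => Real.exp (-t * h x y)) = fun x y =>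
      Real.exp (-t * h x x₀) * Real.exp (-t * h y x₀) *
        Real.exp (t * (h x x₀ + h y x₀ - h x y)) := by
    ext x y
    rw [← Real.exp_add, ← Real.exp_add]
    ring_nf
  rw [hfactor]
  exact (isPosDefKernel_rankOne _).mul ((hh.isPosDefKernel_gromov x₀).const_mul ht.le).exp
end

section
/- Let G be a group and k : G × G → [0,∞) a symmetric kernel. Suppose there exist a real Hilbert space H and maps R, S : G → H such that k(x,y) = ‖R(x) − R(y)‖² + ‖S(x) + S(y)‖² for all x, y ∈ G, and suppose k is bounded on every tube and proper. Then the kernel h(x,y) = ‖R(x) − R(y)‖² is conditionally negative definite, proper, and bounded on tubes. -/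
/-!
Since `‖S x + S y‖² ≤ 2‖S x‖² + 2‖S y‖² = (k(x,x) + k(y,y)) / 2` and `k` is bounded on the
diagonal `Tube {1}`, the kernel `h = ‖R x - R y‖²` satisfies `h ≤ k ≤ h + C` for a constant `C`.
The lower bound transfers boundedness on tubes from `k` to `h`, the upper bound transfers
properness. Conditional negative definiteness is the identity
`∑ᵢⱼ cᵢ cⱼ ‖rᵢ - rⱼ‖² = -2 ‖∑ᵢ cᵢ rᵢ‖²` for `∑ᵢ cᵢ = 0`.
-/

def Tube {G : Type*} [Group G] (K : Set G) : Set (G × G) :=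
  {p | p.1⁻¹ * p.2 ∈ K}

def IsProperKernel {G : Type*} [Group G] [TopologicalSpace G] (k : G → G → ℝ) : Prop :=
  ∀ M : ℝ, 0 < M → ∃ K : Set G, IsCompact K ∧ {p : G × G | k p.1 p.2 ≤ M} ⊆ Tube K

def BoundedOnTubes {G : Type*} [Group G] [TopologicalSpace G] (k : G → G → ℝ) : Prop :=
  ∀ K : Set G, IsCompact K → ∃ M : ℝ, ∀ p ∈ Tube K, |k p.1 p.2| ≤ M

open Finset

section InnerProductSpace

variable {H : Type*} [NormedAddCommGroup H] [InnerProductSpace ℝ H]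

theorem sum_sum_mul_norm_sub_sq {ι : Type*} [Fintype ι] (c : ι → ℝ) (r : ι → H)
    (hc : ∑ i, c i = 0) :
    ∑ i, ∑ j, c i * c j * ‖r i - r j‖ ^ 2 = -2 * ‖∑ i, c i • r i‖ ^ 2 := by
  have expand : ∀ i j, c i * c j * ‖r i - r j‖ ^ 2 =
      c j * (c i * ‖r i‖ ^ 2) + c i * (c j * ‖r j‖ ^ 2) -
        2 * inner ℝ (c i • r i) (c j • r j) := by
    intro i j
    rw [norm_sub_sq_real, real_inner_smul_left, real_inner_smul_right]
    ring
  simp_rw [expand, sum_sub_distrib, sum_add_distrib, ← mul_sum, ← sum_mul, hc, ← inner_sum,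
    ← sum_inner, real_inner_self_eq_norm_sq]
  simp

theorem isCondNegDef_norm_sub_sq {G : Type*} (R : G → H) :
    IsCondNegDef (fun x y => ‖R x - R y‖ ^ 2) := by
  refine ⟨fun x y => by simp only [norm_sub_rev], fun x => by simp, fun n x c hc => ?_⟩
  show ∑ i, ∑ j, c i * c j * ‖(R ∘ x) i - (R ∘ x) j‖ ^ 2 ≤ 0
  rw [sum_sum_mul_norm_sub_sq c (R ∘ x) hc]
  nlinarith [sq_nonneg ‖∑ i, c i • R (x i)‖]

theorem norm_add_sq_le_half_add (a b : H) :
    ‖a + b‖ ^ 2 ≤ (‖a + a‖ ^ 2 + ‖b + b‖ ^ 2) / 2 := by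
  rw [← two_smul ℝ a, ← two_smul ℝ b, norm_smul, norm_smul, Real.norm_two]
  nlinarith [norm_add_le a b, norm_nonneg (a + b), sq_nonneg (‖a‖ - ‖b‖)]

end InnerProductSpace

section Kernels

variable {G : Type*} [Group G] [TopologicalSpace G] {h k : G → G → ℝ}

theorem BoundedOnTubes.exists_diag_le (hk : BoundedOnTubes k) : ∃ M, ∀ x, k x x ≤ M := by
  obtain ⟨M, hM⟩ := hk {1} isCompact_singleton
  exact ⟨M, fun x => (le_abs_self _).trans (hM (x, x) (by simp [Tube]))⟩

theorem BoundedOnTubes.of_le (hk : BoundedOnTubes k) (h_nonneg : ∀ x y, 0 ≤ h x y)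
    (hle : ∀ x y, h x y ≤ k x y) : BoundedOnTubes h := by
  intro K hK
  obtain ⟨M, hM⟩ := hk K hK
  refine ⟨M, fun p hp => ?_⟩
  rw [abs_of_nonneg (h_nonneg p.1 p.2)]
  exact (hle p.1 p.2).trans ((le_abs_self _).trans (hM p hp))

theorem IsProperKernel.of_le_add (hk : IsProperKernel k) {C : ℝ} (hC : 0 ≤ C)
    (hle : ∀ x y, k x y ≤ h x y + C) : IsProperKernel h := by
  intro M hM
  obtain ⟨K, hK, hsub⟩ := hk (M + C) (by linarith)
  exact ⟨K, hK, fun p hp => hsub ((hle p.1 p.2).trans (by simpa using hp))⟩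

end Kernels

theorem split_kernel_gives_cnd_part_general
    {G H : Type*} [Group G] [TopologicalSpace G]
    [NormedAddCommGroup H] [InnerProductSpace ℝ H]
    (k : G → G → ℝ)
    (R S : G → H)
    (hsplit : ∀ x y, k x y = ‖R x - R y‖ ^ 2 + ‖S x + S y‖ ^ 2)
    (hbdd : BoundedOnTubes k) (hproper : IsProperKernel k) :
    IsCondNegDef (fun x y => ‖R x - R y‖ ^ 2) ∧
    IsProperKernel (fun x y => ‖R x - R y‖ ^ 2) ∧
    BoundedOnTubes (fun x y => ‖R x - R y‖ ^ 2) := by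
  obtain ⟨M, hM⟩ := hbdd.exists_diag_le
  have hdiag : ∀ x, k x x = ‖S x + S x‖ ^ 2 := fun x => by simp [hsplit]
  have hS : ∀ x y, ‖S x + S y‖ ^ 2 ≤ M := fun x y => by
    linarith [norm_add_sq_le_half_add (S x) (S y), hdiag x ▸ hM x, hdiag y ▸ hM y]
  have hM_nonneg : 0 ≤ M := (sq_nonneg _).trans (hS 1 1)
  refine ⟨isCondNegDef_norm_sub_sq R, hproper.of_le_add hM_nonneg fun x y => ?_,
    hbdd.of_le (fun _ _ => sq_nonneg _) fun x y => ?_⟩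
  · linarith [hsplit x y, hS x y]
  · linarith [hsplit x y, sq_nonneg ‖S x + S y‖]

theorem split_kernel_gives_cnd_part
    {G H : Type*} [Group G] [TopologicalSpace G] [IsTopologicalGroup G]
    [LocallyCompactSpace G]
    [NormedAddCommGroup H] [InnerProductSpace ℝ H] [CompleteSpace H]
    (k : G → G → ℝ) (hnonneg : ∀ x y, 0 ≤ k x y)
    (hsymm : ∀ x y, k x y = k y x)
    (R S : G → H)
    (hsplit : ∀ x y, k x y = ‖R x - R y‖ ^ 2 + ‖S x + S y‖ ^ 2)
    (hbdd : BoundedOnTubes k) (hproper : IsProperKernel k) :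
    IsCondNegDef (fun x y => ‖R x - R y‖ ^ 2) ∧
    IsProperKernel (fun x y => ‖R x - R y‖ ^ 2) ∧
    BoundedOnTubes (fun x y => ‖R x - R y‖ ^ 2) :=
  split_kernel_gives_cnd_part_general k R S hsplit hbdd hproper
end
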